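/- Let η and γ be Radon measures on ℝ^d with η ≠ 0 and η absolutely continuous with respect to γ. Then for η-almost every x, the total variation distance between the normalized blow-ups η_{x,t} and γ_{x,t} tends to 0 as t → ∞, where ν_{x,t} denotes the measure A ↦ ν(e^{−t}A + x)/ν(B(x, e^{−t})) on the closed unit ball. -/

import Mathlib

/-!
Write `η = g γ` with `g` the Radon–Nikodym density. At an `η`-typical point `x` we have
`0 < g x < ∞`, `x` is a Lebesgue point of `g` for `γ`, and `γ(B(x,r)) / η(B(x,r)) → 1 / g x`.
Every `E ⊆ B(x,r)` then satisfies `|η E - g x · γ E| ≤ δ(r) := ∫_{B(x,r)} |g - g x| dγ`, so after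
normalising by the masses of the ball the two blow-ups differ on every set by `O(δ(r) / γ(B(x,r)))`,
which tends to `0`.
-/

open Filter MeasureTheory Metric
open scoped ENNReal

/-- The normalized blow-up `ν_{x,t}` of a measure `ν` at `x` at scale `e^{-t}`:
`ν_{x,t}(A) = ν(e^{-t}A + x) / ν(B(x, e^{-t}))` for `A ⊆ B(0,1)`. -/
noncomputable def blowUp {d : ℕ} (ν : Measure (EuclideanSpace ℝ (Fin d)))
    (x : EuclideanSpace ℝ (Fin d)) (t : ℝ) : Measure (EuclideanSpace ℝ (Fin d)) :=
  (ν (closedBall x (Real.exp (-t))))⁻¹ •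
    (Measure.map (fun y => Real.exp t • (y - x)) (ν.restrict (closedBall x (Real.exp (-t)))))

/-- Total variation distance between two measures: the supremum over measurable sets
of the (symmetrized) difference of the measures. -/
noncomputable def tvDist {α : Type*} [MeasurableSpace α] (μ ν : Measure α) : ℝ≥0∞ :=
  ⨆ (A : Set α) (_ : MeasurableSet A), ((μ A - ν A) + (ν A - μ A))

open scoped Topology

namespace ENNReal

lemma ofReal_le_ofReal_add_enorm_sub (a b : ℝ) : ENNReal.ofReal a ≤ ENNReal.ofReal b + ‖a - b‖ₑ :=
  calc ENNReal.ofReal a ≤ ENNReal.ofReal (b + |a - b|) :=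
        ENNReal.ofReal_le_ofReal (by linarith [le_abs_self (a - b)])
    _ ≤ ENNReal.ofReal b + ‖a - b‖ₑ := by
        rw [Real.enorm_eq_ofReal_abs]; exact ENNReal.ofReal_add_le

lemma div_le_div_add_two_mul_div {a₁ a₂ b₁ b₂ δ : ℝ≥0∞} (h₁ : a₁ ≤ b₁ + δ) (h₂ : b₂ ≤ a₂ + δ)
    (hb : b₁ ≤ b₂) (ha₂ : a₂ ≠ 0) (ha₂' : a₂ ≠ ∞) (hb₂ : b₂ ≠ 0) (hb₂' : b₂ ≠ ∞) :
    a₁ / a₂ ≤ b₁ / b₂ + 2 * (δ / a₂) := by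
  have hb_le : b₁ / b₂ ≤ 1 := ENNReal.div_le_of_le_mul (by rwa [one_mul])
  have key : a₁ ≤ b₁ / b₂ * a₂ + 2 * δ :=
    calc a₁ ≤ b₁ / b₂ * b₂ + δ := by rwa [ENNReal.div_mul_cancel hb₂ hb₂']
      _ ≤ b₁ / b₂ * (a₂ + δ) + δ := by gcongr
      _ ≤ b₁ / b₂ * a₂ + 2 * δ := by
          rw [mul_add, two_mul, add_assoc]
          gcongr
          exact mul_le_of_le_one_left' hb_le
  calc a₁ / a₂ ≤ (b₁ / b₂ * a₂ + 2 * δ) / a₂ := by gcongr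
    _ = b₁ / b₂ + 2 * (δ / a₂) := by
        rw [ENNReal.add_div, ENNReal.mul_div_cancel_right ha₂ ha₂', mul_div_assoc]

lemma tendsto_div_of_tendsto_div_mul {ι : Type*} {l : Filter ι} {δ a b : ι → ℝ≥0∞} {k : ℝ≥0∞}
    (hδ : Tendsto (fun i => δ i / b i) l (𝓝 0)) (hba : Tendsto (fun i => b i / a i) l (𝓝 k))
    (hk : k ≠ ∞) (hb : ∀ᶠ i in l, b i ≠ 0 ∧ b i ≠ ∞) :
    Tendsto (fun i => δ i / a i) l (𝓝 0) := by
  have := ENNReal.Tendsto.mul hδ (Or.inr hk) hba (Or.inr zero_ne_top)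
  rw [zero_mul] at this
  refine this.congr' ?_
  filter_upwards [hb] with i ⟨hb₀, hb_top⟩
  rw [div_eq_mul_inv, div_eq_mul_inv, div_eq_mul_inv, mul_assoc, ← mul_assoc (b i)⁻¹,
    ENNReal.inv_mul_cancel hb₀ hb_top, one_mul]

lemma tendsto_two_mul_div_add_two_mul_div {ι : Type*} {l : Filter ι}
    {δ a b : ι → ℝ≥0∞} {c : ℝ≥0∞} (hc : c ≠ 0)
    (hδ : Tendsto (fun i => δ i / b i) l (𝓝 0)) (hba : Tendsto (fun i => b i / a i) l (𝓝 c⁻¹))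
    (hb : ∀ᶠ i in l, b i ≠ 0 ∧ b i ≠ ∞) :
    Tendsto (fun i => 2 * (δ i / a i) + 2 * (δ i / (c * b i))) l (𝓝 0) := by
  have hc' : c⁻¹ ≠ ∞ := ENNReal.inv_ne_top.2 hc
  have ha := tendsto_div_of_tendsto_div_mul hδ hba hc' hb
  have hcb : Tendsto (fun i => δ i / (c * b i)) l (𝓝 0) := by
    have := ENNReal.Tendsto.const_mul hδ (Or.inr hc')
    rw [mul_zero] at this
    refine this.congr' ?_
    filter_upwards [hb] with i hbi
    rw [div_eq_mul_inv, div_eq_mul_inv, ENNReal.mul_inv (Or.inl hc) (Or.inr hbi.1)]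
    ring
  simpa using (ENNReal.Tendsto.const_mul ha (Or.inr ENNReal.ofNat_ne_top)).add
    (ENNReal.Tendsto.const_mul hcb (Or.inr ENNReal.ofNat_ne_top))

end ENNReal

section WithDensity

variable {α : Type*} [MeasurableSpace α] (ν : Measure α) {g : α → ℝ} (c : ℝ) {E B : Set α}

lemma withDensity_ofReal_apply_le (hE : MeasurableSet E) (hEB : E ⊆ B) :
    ν.withDensity (fun y => ENNReal.ofReal (g y)) E ≤
      ENNReal.ofReal c * ν E + ∫⁻ y in B, ‖g y - c‖ₑ ∂ν :=
  calc ν.withDensity (fun y => ENNReal.ofReal (g y)) E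
      ≤ ∫⁻ y in E, (ENNReal.ofReal c + ‖g y - c‖ₑ) ∂ν := by
        rw [withDensity_apply _ hE]
        exact lintegral_mono fun y => ENNReal.ofReal_le_ofReal_add_enorm_sub _ _
    _ = ENNReal.ofReal c * ν E + ∫⁻ y in E, ‖g y - c‖ₑ ∂ν := by
        rw [lintegral_add_left measurable_const, setLIntegral_const, mul_comm]
    _ ≤ ENNReal.ofReal c * ν E + ∫⁻ y in B, ‖g y - c‖ₑ ∂ν := by
        gcongr

lemma ofReal_mul_le_withDensity_ofReal_apply (hg : Measurable g) (hE : MeasurableSet E)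
    (hEB : E ⊆ B) :
    ENNReal.ofReal c * ν E ≤
      ν.withDensity (fun y => ENNReal.ofReal (g y)) E + ∫⁻ y in B, ‖g y - c‖ₑ ∂ν :=
  calc ENNReal.ofReal c * ν E = ∫⁻ _ in E, ENNReal.ofReal c ∂ν := by
        rw [setLIntegral_const, mul_comm]
    _ ≤ ∫⁻ y in E, (ENNReal.ofReal (g y) + ‖c - g y‖ₑ) ∂ν :=
        lintegral_mono fun y => ENNReal.ofReal_le_ofReal_add_enorm_sub _ _
    _ = ν.withDensity (fun y => ENNReal.ofReal (g y)) E + ∫⁻ y in E, ‖g y - c‖ₑ ∂ν := by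
        simp_rw [enorm_sub_rev c]
        rw [lintegral_add_left hg.ennreal_ofReal, withDensity_apply _ hE]
    _ ≤ ν.withDensity (fun y => ENNReal.ofReal (g y)) E + ∫⁻ y in B, ‖g y - c‖ₑ ∂ν := by
        gcongr

end WithDensity

section BlowUp

variable {d : ℕ}

lemma blowUp_apply (ν : Measure (EuclideanSpace ℝ (Fin d))) (x : EuclideanSpace ℝ (Fin d)) (t : ℝ)
    {A : Set (EuclideanSpace ℝ (Fin d))} (hA : MeasurableSet A) :
    blowUp ν x t A =
      ν ((fun y => Real.exp t • (y - x)) ⁻¹' A ∩ closedBall x (Real.exp (-t))) /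
        ν (closedBall x (Real.exp (-t))) := by
  have hT : Measurable fun y : EuclideanSpace ℝ (Fin d) => Real.exp t • (y - x) := by fun_prop
  rw [blowUp, Measure.smul_apply, Measure.map_apply hT hA,
    Measure.restrict_apply (hT hA), smul_eq_mul, mul_comm, div_eq_mul_inv]

lemma tvDist_blowUp_le (η γ : Measure (EuclideanSpace ℝ (Fin d))) (x : EuclideanSpace ℝ (Fin d))
    (t : ℝ) {c δ : ℝ≥0∞} (hc : c ≠ 0) (hc' : c ≠ ∞)
    (hη : η (closedBall x (Real.exp (-t))) ≠ 0) (hη' : η (closedBall x (Real.exp (-t))) ≠ ∞)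
    (hγ : γ (closedBall x (Real.exp (-t))) ≠ 0) (hγ' : γ (closedBall x (Real.exp (-t))) ≠ ∞)
    (hδ : ∀ E, MeasurableSet E → E ⊆ closedBall x (Real.exp (-t)) →
      η E ≤ c * γ E + δ ∧ c * γ E ≤ η E + δ) :
    tvDist (blowUp η x t) (blowUp γ x t) ≤
      2 * (δ / η (closedBall x (Real.exp (-t)))) +
        2 * (δ / (c * γ (closedBall x (Real.exp (-t))))) := by
  set B := closedBall x (Real.exp (-t))
  refine iSup₂_le fun A hA => ?_
  rw [blowUp_apply η x t hA, blowUp_apply γ x t hA]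
  set E := (fun y => Real.exp t • (y - x)) ⁻¹' A ∩ B
  have hE : MeasurableSet E :=
    (measurableSet_preimage (by fun_prop) hA).inter measurableSet_closedBall
  have hEB : E ⊆ B := Set.inter_subset_right
  obtain ⟨hηE, hγE⟩ := hδ E hE hEB
  obtain ⟨hηB, hγB⟩ := hδ B measurableSet_closedBall subset_rfl
  have hcγ : c * γ B ≠ 0 := mul_ne_zero hc hγ
  have hcγ' : c * γ B ≠ ∞ := ENNReal.mul_ne_top hc' hγ'
  have h₁ := ENNReal.div_le_div_add_two_mul_div hηE hγB (by gcongr) hη hη' hcγ hcγ'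
  have h₂ := ENNReal.div_le_div_add_two_mul_div hγE hηB (measure_mono hEB) hcγ hcγ' hη hη'
  rw [ENNReal.mul_div_mul_left _ _ hc hc'] at h₁ h₂
  exact add_le_add (tsub_le_iff_left.2 h₁) (tsub_le_iff_left.2 h₂)

end BlowUp

section Differentiation

lemma ae_forall_measure_closedBall_pos {X : Type*} [PseudoMetricSpace X] [MeasurableSpace X]
    [HereditarilyLindelofSpace X] (μ : Measure X) :
    ∀ᵐ x ∂μ, ∀ r, 0 < r → 0 < μ (closedBall x r) := by
  filter_upwards [μ.support_mem_ae] with x hx r hr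
  exact (Measure.mem_support_iff_forall x).1 hx _ (closedBall_mem_nhds x hr)

variable {β : Type*} [MetricSpace β] [MeasurableSpace β] [BorelSpace β]
  [SecondCountableTopology β] [HasBesicovitchCovering β]

lemma Besicovitch.ae_tendsto_lintegral_closedBall_enorm_sub_div {E : Type*}
    [NormedAddCommGroup E] (μ : Measure β) [IsLocallyFiniteMeasure μ] {f : β → E}
    (hf : LocallyIntegrable f μ) :
    ∀ᵐ x ∂μ, Tendsto (fun r => (∫⁻ y in closedBall x r, ‖f y - f x‖ₑ ∂μ) / μ (closedBall x r))
      (𝓝[>] 0) (𝓝 0) := by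
  filter_upwards [(Besicovitch.vitaliFamily μ).ae_tendsto_lintegral_enorm_sub_div hf] with x hx
  exact hx.comp (Besicovitch.tendsto_filterAt μ x)

end Differentiation

theorem stmt4_general {d : ℕ} (η γ : Measure (EuclideanSpace ℝ (Fin d)))
    [IsLocallyFiniteMeasure η] [IsLocallyFiniteMeasure γ]
    (hac : η ≪ γ) :
    ∀ᵐ x ∂η, Tendsto (fun t => tvDist (blowUp η x t) (blowUp γ x t)) atTop (nhds 0) := by
  set g := fun y => (η.rnDeriv γ y).toReal
  have hg : Measurable g := (Measure.measurable_rnDeriv η γ).ennreal_toReal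
  have hηg : η = γ.withDensity fun y => ENNReal.ofReal (g y) := by
    refine (Measure.withDensity_rnDeriv_eq η γ hac).symm.trans (withDensity_congr_ae ?_)
    filter_upwards [Measure.rnDeriv_lt_top η γ] with y hy
    exact (ENNReal.ofReal_toReal hy.ne).symm
  have hg_loc : LocallyIntegrable g γ := fun x =>
    ⟨_, closedBall_mem_nhds x one_pos,
      Measure.integrableOn_toReal_rnDeriv measure_closedBall_lt_top.ne⟩
  filter_upwards [Measure.rnDeriv_pos hac, hac.ae_le (Measure.rnDeriv_lt_top η γ),
    Besicovitch.ae_tendsto_rnDeriv γ η, Measure.inv_rnDeriv hac,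
    hac.ae_le (Besicovitch.ae_tendsto_lintegral_closedBall_enorm_sub_div γ hg_loc),
    ae_forall_measure_closedBall_pos η] with x hpos hfin hratio hinv hleb hball
  have hc : η.rnDeriv γ x = ENNReal.ofReal (g x) := (ENNReal.ofReal_toReal hfin.ne).symm
  have hηB : ∀ r, 0 < r → η (closedBall x r) ≠ 0 := fun r hr => (hball r hr).ne'
  have hγB : ∀ r, 0 < r → γ (closedBall x r) ≠ 0 := fun r hr h => hηB r hr (hac h)
  have hbound : ∀ t, tvDist (blowUp η x t) (blowUp γ x t) ≤ _ := fun t =>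
    tvDist_blowUp_le η γ x t (hc ▸ hpos.ne') ENNReal.ofReal_ne_top (hηB _ (Real.exp_pos _))
      measure_closedBall_lt_top.ne (hγB _ (Real.exp_pos _)) measure_closedBall_lt_top.ne
      fun E hE hEB => by
        rw [hηg]
        exact ⟨withDensity_ofReal_apply_le γ _ hE hEB,
          ofReal_mul_le_withDensity_ofReal_apply γ _ hg hE hEB⟩
  have hlim := ENNReal.tendsto_two_mul_div_add_two_mul_div (hc ▸ hpos.ne') hleb
    (by rwa [← hc, ← Pi.inv_apply, hinv])
    (eventually_nhdsWithin_of_forall fun r hr => ⟨hγB r hr, measure_closedBall_lt_top.ne⟩)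
  exact tendsto_of_tendsto_of_tendsto_of_le_of_le tendsto_const_nhds
    (hlim.comp (Real.tendsto_exp_atBot_nhdsGT.comp tendsto_neg_atTop_atBot))
    (fun _ => zero_le) hbound

/-- **Asymptotic agreement of blow-ups of absolutely continuous measures.**
If `η ≠ 0` and `η ≪ γ` are Radon measures on `ℝ^d`, then for η-a.e. `x` the
total variation distance between `η_{x,t}` and `γ_{x,t}` tends to `0` as `t → ∞`. -/
theorem stmt4 {d : ℕ} (η γ : Measure (EuclideanSpace ℝ (Fin d)))
    [IsLocallyFiniteMeasure η] [IsLocallyFiniteMeasure γ]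
    (hη : η ≠ 0) (hac : η ≪ γ) :
    ∀ᵐ x ∂η, Tendsto (fun t => tvDist (blowUp η x t) (blowUp γ x t)) atTop (nhds 0) :=
  stmt4_general η γ hac
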